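/- arXiv:2410.22933 — 2 statements merged into one kernel-verified Lean document; each statement's English description precedes it below -/
import Mathlib

section
/- A countable family K = (A_i)_{i∈I} of pairwise nonisomorphic structures is Fin-learnable if and only if K is =_ℕ-learnable, i.e., there exists a map Γ from structures to ℕ, continuous on LD(K) (where ℕ carries the discrete topology and structures the product topology), such that for all R, R' ∈ LD(K): R ≅ R' if and only if Γ R = Γ R'. -/
/-- A structure on domain ℕ: a binary relation given as a map to `Bool`. -/
abbrev Struc := ℕ → ℕ → Bool

/-- The restrictions of `R` and `R'` to `{0,…,s} × {0,…,s}` agree. -/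
def restrEq (R R' : Struc) (s : ℕ) : Prop :=
  ∀ x ≤ s, ∀ y ≤ s, R x y = R' x y

/-- `R` and `R'` are isomorphic structures. -/
def Isom (R R' : Struc) : Prop :=
  ∃ e : ℕ ≃ ℕ, ∀ x y, R' (e x) (e y) = R x y

/-- `R↾s` embeds into `R'`: there is a map injective on `{0,…,s}` preserving the relation. -/
def EmbedsRestr (R : Struc) (s : ℕ) (R' : Struc) : Prop :=
  ∃ h : ℕ → ℕ, (∀ x ≤ s, ∀ y ≤ s, h x = h y → x = y) ∧
    (∀ x ≤ s, ∀ y ≤ s, R' (h x) (h y) = R x y)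

/-- The learning domain of a family: all isomorphic copies of members of the family. -/
def LD {I : Type} (A : I → Struc) : Set Struc := {R | ∃ i, Isom R (A i)}

/-- A learner: its conjecture at stage `s` depends only on `R↾s`. -/
def IsLearner {I : Type} (M : Struc → ℕ → Option I) : Prop :=
  ∀ R R' s, restrEq R R' s → M R s = M R' s

/-- `M` Ex-learns the family `A`. -/
def ExLearns {I : Type} (A : I → Struc) (M : Struc → ℕ → Option I) : Prop :=
  ∀ R i, Isom R (A i) → ∃ s₀, ∀ s ≥ s₀, M R s = some i

/-- `M` Fin-learns the family `A`. -/
def FinLearns {I : Type} (A : I → Struc) (M : Struc → ℕ → Option I) : Prop :=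
  ∀ R i, Isom R (A i) →
    ∃ s₀, (∀ s < s₀, M R s = none) ∧ (∀ s ≥ s₀, M R s = some i)

/-- `M` co-learns the family `A`. -/
def CoLearns {I : Type} (A : I → Struc) (M : Struc → ℕ → Option I) : Prop :=
  ∀ R i, Isom R (A i) → ∀ j, (∃ s, M R s = some j) ↔ j ≠ i

/-- `M` nUs-learns the family `A`: it Ex-learns it and never abandons the correct conjecture. -/
def NUsLearns {I : Type} (A : I → Struc) (M : Struc → ℕ → Option I) : Prop :=
  ExLearns A M ∧
    ∀ R i, Isom R (A i) → ∀ s, M R s = some i → ∀ t ≥ s, M R t = some i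

/-- `M` Dec-learns the family `A`: it Ex-learns it and never repeats an abandoned conjecture. -/
def DecLearns {I : Type} (A : I → Struc) (M : Struc → ℕ → Option I) : Prop :=
  ExLearns A M ∧
    ∀ R ∈ LD A, ∀ (j : I) (s : ℕ), M R s = some j → M R (s + 1) ≠ some j →
      ∀ t > s, M R t ≠ some j

/-- `M` PL-learns the family `A`: the unique conjecture output infinitely often is correct. -/
def PLLearns {I : Type} (A : I → Struc) (M : Struc → ℕ → Option I) : Prop :=
  ∀ R ∈ LD A, ∀ i, {s | M R s = some i}.Infinite ↔ Isom R (A i)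

/-- The relation `E₀` on Baire space: eventual agreement. -/
def E0 (p q : ℕ → ℕ) : Prop := ∃ m, ∀ n ≥ m, p n = q n

/-- The relation `E₃` on `ℕ → (ℕ → ℕ)`: columnwise `E₀`. -/
def E3 (p q : ℕ → ℕ → ℕ) : Prop := ∀ m, E0 (p m) (q m)

/-- The relation `E_range` on Baire space: equality of ranges. -/
def Erange (p q : ℕ → ℕ) : Prop := Set.range p = Set.range q


lemma isom_refl (R : Struc) : Isom R R := ⟨Equiv.refl ℕ, fun _ _ => rfl⟩

lemma isom_symm {R R' : Struc} (h : Isom R R') : Isom R' R := by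
  obtain ⟨e, he⟩ := h
  exact ⟨e.symm, fun x y => by simpa using (he (e.symm x) (e.symm y)).symm⟩

lemma isom_trans {R R' R'' : Struc} (h : Isom R R') (h' : Isom R' R'') : Isom R R'' := by
  obtain ⟨e, he⟩ := h; obtain ⟨f, hf⟩ := h'
  exact ⟨e.trans f, fun x y => by simpa using (hf (e x) (e y)).trans (he x y)⟩

lemma restrEq_refl (R : Struc) (s : ℕ) : restrEq R R s := fun _ _ _ _ => rfl

lemma restrEq_mono {R R' : Struc} {s t : ℕ} (h : restrEq R R' s) (ht : t ≤ s) :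
    restrEq R R' t := fun x hx y hy => h x (hx.trans ht) y (hy.trans ht)

lemma cylinder_isOpen (R : Struc) (s : ℕ) : IsOpen {R' : Struc | restrEq R R' s} := by
  have hset : {R' : Struc | restrEq R R' s} =
      ⋂ x ∈ Finset.range (s+1), ⋂ y ∈ Finset.range (s+1), {R' : Struc | R' x y = R x y} := by
    ext R'
    simp only [Set.mem_setOf_eq, Set.mem_iInter, Finset.mem_range, Nat.lt_succ_iff, restrEq]
    constructor
    · intro h x hx y hy; exact (h x hx y hy).symm
    · intro h x hx y hy; exact (h x hx y hy).symm
  rw [hset]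
  refine isOpen_biInter_finset fun x _ => isOpen_biInter_finset fun y _ => ?_
  have hcont : Continuous (fun R' : Struc => R' x y) :=
    (continuous_apply y).comp (continuous_apply x)
  exact IsOpen.preimage hcont (isOpen_discrete ({R x y} : Set Bool))

lemma exists_cylinder_subset {U : Set Struc} (hU : IsOpen U) {R : Struc} (hR : R ∈ U) :
    ∃ s, ∀ R', restrEq R R' s → R' ∈ U := by
  set φ : (ℕ × ℕ → Bool) → Struc := fun f x y => f (x, y) with hφ
  have hφc : Continuous φ :=
    continuous_pi fun x => continuous_pi fun y => continuous_apply (x, y)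
  have hU' : IsOpen (φ ⁻¹' U) := hU.preimage hφc
  have hRmem : (fun p : ℕ × ℕ => R p.1 p.2) ∈ φ ⁻¹' U := hR
  obtain ⟨F, u, h1, h2⟩ := isOpen_pi_iff.mp hU' _ hRmem
  refine ⟨F.sup (fun p => max p.1 p.2), fun R' hre => ?_⟩
  have hmem : (fun p : ℕ × ℕ => R' p.1 p.2) ∈ (↑F : Set (ℕ × ℕ)).pi u := by
    intro p hp
    have hpF : p ∈ F := hp
    have hx : p.1 ≤ F.sup (fun p => max p.1 p.2) :=
      le_trans (le_max_left _ _) (Finset.le_sup (f := fun p : ℕ × ℕ => max p.1 p.2) hpF)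
    have hy : p.2 ≤ F.sup (fun p => max p.1 p.2) :=
      le_trans (le_max_right _ _) (Finset.le_sup (f := fun p : ℕ × ℕ => max p.1 p.2) hpF)
    have heq : R' p.1 p.2 = R p.1 p.2 := (hre p.1 hx p.2 hy).symm
    simpa [heq] using (h1 p hpF).2
  exact h2 hmem

/-- A countable family of pairwise nonisomorphic structures is Fin-learnable iff it is
`=_ℕ`-learnable. -/
theorem finLearnable_iff_eqNatLearnable {I : Type} [Countable I] (A : I → Struc)
    (hA : ∀ i j, i ≠ j → ¬ Isom (A i) (A j)) :
    (∃ M : Struc → ℕ → Option I, IsLearner M ∧ FinLearns A M) ↔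
      ∃ Γ : Struc → ℕ, ContinuousOn Γ (LD A) ∧
        ∀ R ∈ LD A, ∀ R' ∈ LD A, (Isom R R' ↔ Γ R = Γ R') := by
  classical
  constructor
  · rintro ⟨M, hM, hFin⟩
    obtain ⟨ι, hι⟩ := Countable.exists_injective_nat I
    set Γ : Struc → ℕ := fun R =>
      if h : ∃ s, (M R s).isSome then ι ((M R (Nat.find h)).get (Nat.find_spec h)) else 0
      with hΓdef
    -- key local computation
    have hloc : ∀ R i, Isom R (A i) → ∃ s₀, ∀ R', restrEq R R' s₀ → Γ R' = ι i := by
      intro R i hRi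
      obtain ⟨s₀, h1, h2⟩ := hFin R i hRi
      refine ⟨s₀, fun R' hre => ?_⟩
      have hMeq : ∀ s ≤ s₀, M R' s = M R s :=
        fun s hs => (hM R R' s (restrEq_mono hre hs)).symm
      have hsome : M R' s₀ = some i := by rw [hMeq s₀ le_rfl, h2 s₀ le_rfl]
      have hex : ∃ s, (M R' s).isSome := ⟨s₀, by rw [hsome]; rfl⟩
      have hge : s₀ ≤ Nat.find hex := by
        by_contra hlt
        push_neg at hlt
        have := Nat.find_spec hex
        rw [hMeq _ hlt.le, h1 _ hlt] at this
        simp at this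
      have hfind : Nat.find hex = s₀ :=
        le_antisymm (Nat.find_le (by rw [hsome]; rfl)) hge
      rw [hΓdef]
      simp only [dif_pos hex]
      have : M R' (Nat.find hex) = some i := by rw [hfind, hsome]
      congr 1
      simp [this]
    have hΓval : ∀ R i, Isom R (A i) → Γ R = ι i := by
      intro R i hRi
      obtain ⟨s₀, hs₀⟩ := hloc R i hRi
      exact hs₀ R (restrEq_refl R s₀)
    refine ⟨Γ, ?_, ?_⟩
    · intro R hR
      obtain ⟨i, hRi⟩ := hR
      obtain ⟨s₀, hs₀⟩ := hloc R i hRi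
      have hmem : {R' : Struc | restrEq R R' s₀} ∈ nhdsWithin R (LD A) :=
        mem_nhdsWithin_of_mem_nhds ((cylinder_isOpen R s₀).mem_nhds (restrEq_refl R s₀))
      show Filter.Tendsto Γ (nhdsWithin R (LD A)) (nhds (Γ R))
      rw [nhds_discrete, Filter.tendsto_pure]
      refine Filter.mem_of_superset hmem fun R' hre => ?_
      show Γ R' = Γ R
      rw [hs₀ R' hre, hΓval R i hRi]
    · rintro R ⟨i, hRi⟩ R' ⟨j, hRj⟩
      rw [hΓval R i hRi, hΓval R' j hRj]
      constructor
      · intro h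
        have hij : Isom (A i) (A j) :=
          isom_trans (isom_trans (isom_symm hRi) h) hRj
        by_contra hne
        have : i = j := by
          by_contra hne'
          exact hA i j hne' hij
        exact hne (congrArg ι this)
      · intro h
        have hijeq : i = j := hι h
        subst hijeq
        exact isom_trans hRi (isom_symm hRj)
  · rintro ⟨Γ, hc, hiff⟩
    set trunc : Struc → ℕ → Struc := fun R s x y =>
      if x ≤ s ∧ y ≤ s then R x y else false with htr
    set cond : Struc → ℕ → I → Prop := fun R s i =>
      ∀ R' ∈ LD A, restrEq R R' s → Γ R' = Γ (A i) with hconddef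
    set G : Struc → ℕ → Option I := fun T s =>
      if h : ∃ i, cond T s i then some h.choose else none with hGdef
    refine ⟨fun R s => G (trunc R s) s, ?_, ?_⟩
    · intro R R' s hre
      have : trunc R s = trunc R' s := by
        funext x y
        simp only [htr]
        split
        · next h => exact hre x h.1 y h.2
        · rfl
      show G (trunc R s) s = G (trunc R' s) s
      rw [this]
    · intro R i₀ hRi₀
      have hR : R ∈ LD A := ⟨i₀, hRi₀⟩
      have hAiLD : ∀ i, A i ∈ LD A := fun i => ⟨i, isom_refl (A i)⟩
      have hΓR : Γ R = Γ (A i₀) := (hiff R hR (A i₀) (hAiLD i₀)).mp hRi₀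
      -- restrictions of trunc agree
      have htreq : ∀ s R' , restrEq (trunc R s) R' s ↔ restrEq R R' s := by
        intro s R'
        constructor
        · intro h x hx y hy
          have := h x hx y hy
          simpa [htr, hx, hy] using this
        · intro h x hx y hy
          simpa [htr, hx, hy] using h x hx y hy
      have hcond_iff : ∀ s i, cond (trunc R s) s i ↔ cond R s i := by
        intro s i
        constructor
        · intro h R' hR' hre; exact h R' hR' ((htreq s R').mpr hre)
        · intro h R' hR' hre; exact h R' hR' ((htreq s R').mp hre)
      -- uniqueness of candidate
      have huniq : ∀ s j, cond R s j → j = i₀ := by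
        intro s j hj
        have h1 : Γ R = Γ (A j) := hj R hR (restrEq_refl R s)
        have h2 : Γ (A j) = Γ (A i₀) := h1.symm.trans hΓR
        have : Isom (A j) (A i₀) := (hiff (A j) (hAiLD j) (A i₀) (hAiLD i₀)).mpr h2
        by_contra hne
        exact hA j i₀ hne this
      -- existence of a stage where cond holds
      have hcwa := hc R hR
      have hpre : Γ ⁻¹' {Γ R} ∈ nhdsWithin R (LD A) :=
        hcwa ((isOpen_discrete ({Γ R} : Set ℕ)).mem_nhds rfl)
      obtain ⟨U, hUo, hRU, hUsub⟩ := mem_nhdsWithin.mp hpre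
      obtain ⟨s₁, hs₁⟩ := exists_cylinder_subset hUo hRU
      have hcond₁ : cond R s₁ i₀ := by
        intro R' hR' hre
        have : R' ∈ Γ ⁻¹' {Γ R} := hUsub ⟨hs₁ R' hre, hR'⟩
        have hΓR' : Γ R' = Γ R := this
        rw [hΓR', hΓR]
      have hexist : ∃ s, ∃ j, cond R s j := ⟨s₁, i₀, hcond₁⟩
      refine ⟨Nat.find hexist, ?_, ?_⟩
      · intro s hs
        have hno : ¬ ∃ j, cond R s j := Nat.find_min hexist hs
        have hno' : ¬ ∃ j, cond (trunc R s) s j := by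
          intro ⟨j, hj⟩; exact hno ⟨j, (hcond_iff s j).mp hj⟩
        simp only [hGdef]
        rw [dif_neg hno']
      · intro s hs
        obtain ⟨j, hj⟩ := Nat.find_spec hexist
        have hjs : cond R s j := by
          intro R' hR' hre
          exact hj R' hR' (restrEq_mono hre hs)
        have hex' : ∃ i, cond (trunc R s) s i := ⟨j, (hcond_iff s j).mpr hjs⟩
        simp only [hGdef]
        rw [dif_pos hex']
        have : hex'.choose = i₀ :=
          huniq s _ ((hcond_iff s _).mp hex'.choose_spec)
        rw [this]
end

section
/- A countable family K = (A_i)_{i∈I} of pairwise nonisomorphic structures is nUs-learnable if and only if both: (1) for all i ≠ j there exists s with A_i↾s not embedding into A_j or A_j↾s not embedding into A_i; and (2) for every i there exists s such that for every j ≠ i with the property that A_j↾t embeds into A_i for every t, the restriction A_i↾s does not embed into A_j. (This is the paper's characterization of nUs-learnability by solid Σ^inf_1-partial orders, stated in its equivalent combinatorial form: Σ^inf_1-theory inclusion between relational structures is equivalent to embeddability of all finite restrictions.) -/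
-- basic aux lemmas
lemma restrEq_symm {R R' : Struc} {s : ℕ} (h : restrEq R R' s) : restrEq R' R s :=
  fun x hx y hy => (h x hx y hy).symm

/-- If `R ≅ S` then every restriction of `R` embeds into `S`. -/
lemma embeds_of_isom {R S : Struc} (h : Isom R S) (t : ℕ) : EmbedsRestr R t S := by
  obtain ⟨e, he⟩ := h
  exact ⟨e, fun x _ y _ hxy => e.injective hxy, fun x _ y _ => he x y⟩

/-- If `R ≅ S` then every restriction of `S` embeds into `R`, with bounded range. -/
lemma embeds_of_isom' {R S : Struc} (h : Isom R S) (t : ℕ) :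
    ∃ B, ∃ h' : ℕ → ℕ, (∀ x ≤ t, ∀ y ≤ t, h' x = h' y → x = y) ∧
      (∀ x ≤ t, h' x ≤ B) ∧
      (∀ x ≤ t, ∀ y ≤ t, R (h' x) (h' y) = S x y) := by
  obtain ⟨e, he⟩ := h
  refine ⟨(Finset.range (t + 1)).sup fun z => e.symm z, fun z => e.symm z,
    fun x _ y _ hxy => by simpa using e.symm.injective hxy,
    fun x hx => Finset.le_sup (by simp [Nat.lt_succ_iff, hx]), fun x _ y _ => ?_⟩
  have := he (e.symm x) (e.symm y)
  simpa using this.symm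

lemma embeds_trans {S R T : Struc} {t : ℕ} (h1 : EmbedsRestr S t R)
    (h2 : ∀ u, EmbedsRestr R u T) : EmbedsRestr S t T := by
  obtain ⟨h, hinj, hrel⟩ := h1
  set u := (Finset.range (t + 1)).sup h with hu
  have hb : ∀ x ≤ t, h x ≤ u := fun x hx =>
    Finset.le_sup (by simp [Nat.lt_succ_iff, hx])
  obtain ⟨g, ginj, grel⟩ := h2 u
  refine ⟨g ∘ h, fun x hx y hy hxy => hinj x hx y hy ?_, fun x hx y hy => ?_⟩
  · exact ginj _ (hb x hx) _ (hb y hy) hxy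
  · rw [Function.comp_apply, Function.comp_apply, grel _ (hb x hx) _ (hb y hy),
      hrel x hx y hy]

lemma exists_perm_extend : ∀ (s : ℕ) (h : ℕ → ℕ),
    (∀ x ≤ s, ∀ y ≤ s, h x = h y → x = y) → ∃ π : ℕ ≃ ℕ, ∀ x ≤ s, π x = h x := by
  intro s
  induction s with
  | zero =>
    intro h _
    exact ⟨Equiv.swap 0 (h 0), fun x hx => by
      interval_cases x; simp [Equiv.swap_apply_left]⟩
  | succ s ih =>
    intro h hinj
    obtain ⟨π, hπ⟩ := ih h (fun x hx y hy => hinj x (hx.trans (Nat.le_succ s)) y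
      (hy.trans (Nat.le_succ s)))
    by_cases hc : π (s + 1) = h (s + 1)
    · exact ⟨π, fun x hx => by
        rcases Nat.lt_succ_iff_lt_or_eq.mp (Nat.lt_succ_of_le hx) with h' | h'
        · exact hπ x (Nat.lt_succ_iff.mp h')
        · subst h'; exact hc⟩
    · refine ⟨π.trans (Equiv.swap (π (s + 1)) (h (s + 1))), fun x hx => ?_⟩
      rcases Nat.lt_succ_iff_lt_or_eq.mp (Nat.lt_succ_of_le hx) with h' | h'
      · have hx' : x ≤ s := Nat.lt_succ_iff.mp h'
        have e1 : π x = h x := hπ x hx'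
        have n1 : h x ≠ π (s + 1) := by
          intro he
          have : π x = π (s+1) := by rw [e1, he]
          exact absurd (π.injective this) (by omega)
        have n2 : h x ≠ h (s + 1) := by
          intro he
          exact absurd (hinj x (hx'.trans (Nat.le_succ s)) (s+1) le_rfl he) (by omega)
        simp only [Equiv.trans_apply, e1]
        rw [Equiv.swap_apply_of_ne_of_ne n1 n2]
      · subst h'
        simp only [Equiv.trans_apply, Equiv.swap_apply_left]

lemma exists_copy {S : Struc} {h : ℕ → ℕ} {s : ℕ}
    (hinj : ∀ x ≤ s, ∀ y ≤ s, h x = h y → x = y) :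
    ∃ R : Struc, Isom R S ∧ ∀ x ≤ s, ∀ y ≤ s, R x y = S (h x) (h y) := by
  obtain ⟨π, hπ⟩ := exists_perm_extend s h hinj
  exact ⟨fun x y => S (π x) (π y), ⟨π, fun x y => rfl⟩,
    fun x hx y hy => by show S (π x) (π y) = _; rw [hπ x hx, hπ y hy]⟩
/-- Key fooling lemma: if `M` nUs-learns `A`, `i ≠ j`, all restrictions of `A j` embed
into `A i`, and `M` conjectures `i` on `A i` at stage `s₀`, then `A i ↾ s₀` cannot
embed into `A j`. -/
lemma key_fooling {I : Type} {A : I → Struc} {M : Struc → ℕ → Option I}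
    (hM : IsLearner M) (hEx : ExLearns A M)
    (hUs : ∀ R i, Isom R (A i) → ∀ s, M R s = some i → ∀ t ≥ s, M R t = some i)
    {i j : I} (hne : i ≠ j) (hji : ∀ t, EmbedsRestr (A j) t (A i))
    {s₀ : ℕ} (hs₀ : M (A i) s₀ = some i) : ¬ EmbedsRestr (A i) s₀ (A j) := by
  rintro ⟨h, hinj, hrel⟩
  -- build Q ≅ A j with Q ↾ s₀ = A i ↾ s₀
  obtain ⟨Q, hQ, hQr⟩ := exists_copy (S := A j) hinj
  have hQAi : restrEq Q (A i) s₀ := fun x hx y hy => by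
    rw [hQr x hx y hy, hrel x hx y hy]
  -- M converges to j on Q
  obtain ⟨s₁', hs₁'⟩ := hEx Q j hQ
  set s₁ := max s₀ s₁' with hs₁def
  have hQj : M Q s₁ = some j := hs₁' s₁ (le_max_right _ _)
  -- Q ↾ s₁ embeds into A i
  have hQemb : EmbedsRestr Q s₁ (A i) :=
    embeds_trans (embeds_of_isom hQ s₁) hji
  obtain ⟨g, ginj, grel⟩ := hQemb
  -- build R ≅ A i with R ↾ s₁ = Q ↾ s₁
  obtain ⟨R, hR, hRr⟩ := exists_copy (S := A i) ginj
  have hRQ : restrEq R Q s₁ := fun x hx y hy => by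
    rw [hRr x hx y hy, grel x hx y hy]
  have hRs₀ : M R s₀ = some i := by
    rw [hM R Q s₀ (restrEq_mono hRQ (le_max_left _ _)),
      hM Q (A i) s₀ hQAi, hs₀]
  have hRs₁ : M R s₁ = some i := hUs R i hR s₀ hRs₀ s₁ (le_max_left _ _)
  have : M R s₁ = some j := by rw [hM R Q s₁ hRQ, hQj]
  rw [hRs₁] at this
  exact hne (Option.some_inj.mp this)

lemma solid_of_learner {I : Type} {A : I → Struc} {M : Struc → ℕ → Option I}
    (hM : IsLearner M) (hN : NUsLearns A M) :
    (∀ i j, i ≠ j →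
        ∃ s, ¬ EmbedsRestr (A i) s (A j) ∨ ¬ EmbedsRestr (A j) s (A i)) ∧
     (∀ i, ∃ s, ∀ j, j ≠ i → (∀ t, EmbedsRestr (A j) t (A i)) →
        ¬ EmbedsRestr (A i) s (A j)) := by
  obtain ⟨hEx, hUs⟩ := hN
  constructor
  · intro i j hne
    by_contra hcon
    push_neg at hcon
    obtain ⟨s₀, hs₀⟩ := hEx (A i) i (isom_refl (A i))
    have hM0 : M (A i) s₀ = some i := hs₀ s₀ le_rfl
    exact key_fooling hM hEx hUs hne (fun t => (hcon t).2) hM0 (hcon s₀).1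
  · intro i
    obtain ⟨s₀, hs₀⟩ := hEx (A i) i (isom_refl (A i))
    exact ⟨s₀, fun j hj hji =>
      key_fooling hM hEx hUs (Ne.symm hj) hji (hs₀ s₀ le_rfl)⟩
open Classical in
/-- `i` is a candidate for `R` at stage `s` (given index coding `ι` and witnesses `w`). -/
def Cand {I : Type} (A : I → Struc) (ι : I → ℕ) (w : I → ℕ)
    (R : Struc) (s : ℕ) (i : I) : Prop :=
  ι i ≤ s ∧ (∀ t ≤ s, EmbedsRestr R t (A i)) ∧
    ∃ h : ℕ → ℕ, (∀ x ≤ w i, ∀ y ≤ w i, h x = h y → x = y) ∧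
      (∀ x ≤ w i, h x ≤ s) ∧
      (∀ x ≤ w i, ∀ y ≤ w i, R (h x) (h y) = A i x y)

open Classical in
/-- Choose the candidate with least code, if any. -/
noncomputable def pick {I : Type} (ι : I → ℕ) (P : I → Prop) : Option I :=
  if h : ∃ i, P i ∧ ∀ j, P j → ι i ≤ ι j then some h.choose else none

open Classical in
noncomputable def learner {I : Type} (A : I → Struc) (ι : I → ℕ) (w : I → ℕ)
    (R : Struc) : ℕ → Option I
  | 0 => pick ι (Cand A ι w R 0)
  | (s + 1) =>
    match learner A ι w R s with
    | some k => if Cand A ι w R (s + 1) k then some k else pick ι (Cand A ι w R (s + 1))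
    | none => pick ι (Cand A ι w R (s + 1))

lemma pick_spec {I : Type} {ι : I → ℕ} {P : I → Prop} {i : I}
    (h : pick ι P = some i) : P i ∧ ∀ j, P j → ι i ≤ ι j := by
  unfold pick at h
  split at h
  · rename_i hex
    obtain rfl : hex.choose = i := Option.some_inj.mp h
    exact hex.choose_spec
  · exact absurd h (by simp)

lemma pick_eq_some {I : Type} {ι : I → ℕ} (hι : Function.Injective ι) {P : I → Prop}
    {i : I} (hi : P i) (hmin : ∀ j, P j → ι i ≤ ι j) : pick ι P = some i := by
  have hex : ∃ i, P i ∧ ∀ j, P j → ι i ≤ ι j := ⟨i, hi, hmin⟩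
  unfold pick
  rw [dif_pos hex]
  congr 1
  have h1 := hex.choose_spec
  exact hι (le_antisymm (h1.2 i hi) (hmin _ h1.1))

lemma pick_isSome {I : Type} {ι : I → ℕ} {P : I → Prop} (hne : ∃ i, P i) :
    ∃ i, pick ι P = some i := by
  obtain ⟨i₀, hi₀⟩ := hne
  have hmem : ι i₀ ∈ {n | ∃ i, P i ∧ ι i = n} := ⟨i₀, hi₀, rfl⟩
  obtain ⟨i, hPi, hii⟩ := Nat.sInf_mem ⟨ι i₀, hmem⟩
  have hex : ∃ i, P i ∧ ∀ j, P j → ι i ≤ ι j :=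
    ⟨i, hPi, fun j hj => by rw [hii]; exact Nat.sInf_le ⟨j, hj, rfl⟩⟩
  exact ⟨hex.choose, by unfold pick; rw [dif_pos hex]⟩

/-- Candidacy only depends on the restriction. -/
lemma cand_ext {I : Type} (A : I → Struc) (ι : I → ℕ) (w : I → ℕ)
    {R R' : Struc} {s : ℕ} (h : restrEq R R' s) :
    Cand A ι w R s = Cand A ι w R' s := by
  have main : ∀ R R' : Struc, restrEq R R' s → ∀ i, Cand A ι w R s i → Cand A ι w R' s i := by
    rintro R R' h i ⟨h1, h2, g, ginj, gbd, grel⟩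
    refine ⟨h1, fun t ht => ?_, g, ginj, gbd, fun x hx y hy => ?_⟩
    · obtain ⟨f, finj, frel⟩ := h2 t ht
      exact ⟨f, finj, fun x hx y hy => by
        rw [frel x hx y hy]; exact h x (hx.trans ht) y (hy.trans ht)⟩
    · rw [← h (g x) (gbd x hx) (g y) (gbd y hy), grel x hx y hy]
  funext i
  exact propext ⟨main R R' h i, main R' R (restrEq_symm h) i⟩

lemma learner_isLearner {I : Type} (A : I → Struc) (ι : I → ℕ) (w : I → ℕ) :
    IsLearner (learner A ι w) := by
  have main : ∀ s (R R' : Struc), restrEq R R' s → learner A ι w R s = learner A ι w R' s := by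
    intro s
    induction s with
    | zero => intro R R' h; simp only [learner, cand_ext A ι w h]
    | succ s ih =>
      intro R R' h
      have hs : restrEq R R' s := restrEq_mono h (Nat.le_succ s)
      simp only [learner]
      rw [ih R R' hs, cand_ext A ι w h]
  exact fun R R' s h => main s R R' h
section LearnerProof

variable {I : Type} {A : I → Struc} {ι : I → ℕ} {w : I → ℕ}

lemma cand_mono {R : Struc} {i : I} (hall : ∀ t, EmbedsRestr R t (A i))
    {s s' : ℕ} (hss' : s ≤ s') (hc : Cand A ι w R s i) : Cand A ι w R s' i := by
  obtain ⟨h1, _, g, ginj, gbd, grel⟩ := hc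
  exact ⟨h1.trans hss', fun t _ => hall t, g, ginj,
    fun x hx => (gbd x hx).trans hss', grel⟩

lemma cand_eventually {R : Struc} {i : I} (hR : Isom R (A i)) :
    ∃ S₁, ∀ s ≥ S₁, Cand A ι w R s i := by
  obtain ⟨B, h', hinj, hbd, hrel⟩ := embeds_of_isom' hR (w i)
  refine ⟨max (ι i) B, fun s hs => ⟨le_trans (le_max_left _ _) hs,
    fun t _ => embeds_of_isom hR t, h', hinj,
    fun x hx => (hbd x hx).trans (le_trans (le_max_right _ _) hs), hrel⟩⟩

lemma wrong_not_cand
    (hw : ∀ i j, j ≠ i → (∀ t, EmbedsRestr (A j) t (A i)) → ¬ EmbedsRestr (A i) (w i) (A j))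
    {R : Struc} {i j : I} (hR : Isom R (A i)) (hji : j ≠ i) :
    ∃ T, ∀ s ≥ T, ¬ Cand A ι w R s j := by
  by_contra hcon
  push_neg at hcon
  have hRallj : ∀ t, EmbedsRestr R t (A j) := by
    intro t
    obtain ⟨s, hs, hc⟩ := hcon t
    exact hc.2.1 t hs
  have hAiR : ∀ t, EmbedsRestr (A i) t R := by
    intro t
    obtain ⟨B, h', hinj, _, hrel⟩ := embeds_of_isom' hR t
    exact ⟨h', hinj, hrel⟩
  have hAiAj : ∀ t, EmbedsRestr (A i) t (A j) :=
    fun t => embeds_trans (hAiR t) hRallj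
  have hAjR : EmbedsRestr (A j) (w j) R := by
    obtain ⟨s, _, hc⟩ := hcon (w j)
    obtain ⟨g, ginj, _, grel⟩ := hc.2.2
    exact ⟨g, ginj, grel⟩
  have hAjAi : EmbedsRestr (A j) (w j) (A i) :=
    embeds_trans hAjR (embeds_of_isom hR)
  exact hw j i (Ne.symm hji) hAiAj hAjAi

lemma learner_cand {R : Struc} {s : ℕ} {k : I}
    (h : learner A ι w R s = some k) : Cand A ι w R s k := by
  cases s with
  | zero => exact (pick_spec h).1
  | succ s =>
    simp only [learner] at h
    cases hprev : learner A ι w R s with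
    | none => rw [hprev] at h; exact (pick_spec h).1
    | some k' =>
      rw [hprev] at h
      dsimp only at h
      by_cases hc : Cand A ι w R (s + 1) k'
      · rw [if_pos hc] at h
        obtain rfl := Option.some_inj.mp h
        exact hc
      · rw [if_neg hc] at h
        exact (pick_spec h).1

lemma learner_persist {R : Struc} {i : I} (hR : Isom R (A i)) {s : ℕ}
    (h : learner A ι w R s = some i) : ∀ t ≥ s, learner A ι w R t = some i := by
  intro t ht
  induction t, ht using Nat.le_induction with
  | base => exact h
  | succ t _ ih =>
    have hc : Cand A ι w R (t + 1) i :=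
      cand_mono (embeds_of_isom hR) (Nat.le_succ t) (learner_cand ih)
    simp only [learner]
    rw [ih]
    dsimp only
    rw [if_pos hc]

lemma learner_learns (hι : Function.Injective ι)
    (hw : ∀ i j, j ≠ i → (∀ t, EmbedsRestr (A j) t (A i)) → ¬ EmbedsRestr (A i) (w i) (A j))
    {R : Struc} {i : I} (hR : Isom R (A i)) :
    ∃ s₀, ∀ s ≥ s₀, learner A ι w R s = some i := by
  -- witnesses for wrong candidates disappearing
  have hTex : ∀ j, ∃ T, j ≠ i → ∀ s ≥ T, ¬ Cand A ι w R s j := by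
    intro j
    by_cases hji : j ≠ i
    · obtain ⟨T, hT⟩ := wrong_not_cand hw hR hji
      exact ⟨T, fun _ => hT⟩
    · exact ⟨0, fun h => absurd h hji⟩
  choose T hT using hTex
  obtain ⟨S₁, hS₁⟩ := cand_eventually (A := A) (ι := ι) (w := w) hR
  -- bound the witnesses for the finitely many indices below ι i
  have hJfin : Set.Finite {j | ι j < ι i} := by
    have : {j | ι j < ι i} = ι ⁻¹' (Set.Iio (ι i)) := rfl
    rw [this]
    exact Set.Finite.preimage hι.injOn (Set.finite_Iio _)
  obtain ⟨B₂, hB₂⟩ := (hJfin.image T).bddAbove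
  set S₂ := max S₁ B₂ with hS₂def
  -- beyond S₂, pick always returns i
  have hpick : ∀ s ≥ S₂, pick ι (Cand A ι w R s) = some i := by
    intro s hs
    have hci : Cand A ι w R s i := hS₁ s (le_trans (le_max_left _ _) hs)
    refine pick_eq_some hι hci ?_
    intro j hj
    by_contra hlt
    push_neg at hlt
    have hJ : j ∈ {j | ι j < ι i} := hlt
    have hTj : T j ≤ B₂ := hB₂ (Set.mem_image_of_mem T hJ)
    have hjne : j ≠ i := fun he => by subst he; exact lt_irrefl _ hlt
    exact hT j hjne s (le_trans (hTj.trans (le_max_right _ _)) hs) hj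
  -- there is a stage at which the learner outputs i
  have hhit : ∃ s, learner A ι w R s = some i := by
    by_contra hnever
    push_neg at hnever
    cases hp : learner A ι w R S₂ with
    | none =>
      have : learner A ι w R (S₂ + 1) = pick ι (Cand A ι w R (S₂ + 1)) := by
        simp only [learner]; rw [hp]
      rw [hpick (S₂ + 1) (le_trans (Nat.le_succ _) (Nat.succ_le_succ le_rfl))] at this
      exact hnever _ this
    | some j =>
      have hjne : j ≠ i := fun he => hnever S₂ (he ▸ hp)
      have hstay : ∀ s ≥ S₂, learner A ι w R s = some j := by
        intro s hs
        induction s, hs using Nat.le_induction with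
        | base => exact hp
        | succ s hs ih =>
          by_cases hc : Cand A ι w R (s + 1) j
          · simp only [learner]; rw [ih]; dsimp only; rw [if_pos hc]
          · exfalso
            have hl : learner A ι w R (s + 1) = pick ι (Cand A ι w R (s + 1)) := by
              simp only [learner]; rw [ih]; dsimp only; rw [if_neg hc]
            exact hnever (s + 1) (hl.trans (hpick (s + 1) (hs.trans (Nat.le_succ s))))
      set u := max S₂ (T j) with hu
      have h1 : learner A ι w R u = some j := hstay u (le_max_left _ _)
      have h2 : ¬ Cand A ι w R (u + 1) j :=
        hT j hjne (u + 1) ((le_max_right _ _).trans (Nat.le_succ u))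
      have : learner A ι w R (u + 1) = pick ι (Cand A ι w R (u + 1)) := by
        simp only [learner]; rw [h1]; dsimp only; rw [if_neg h2]
      rw [hpick (u + 1) ((le_max_left _ _).trans (Nat.le_succ u))] at this
      exact hnever _ this
  obtain ⟨s, hs⟩ := hhit
  exact ⟨s, learner_persist hR hs⟩

end LearnerProof

/-- A countable family of pairwise nonisomorphic structures is nUs-learnable iff it is a
solid Σ¹-partial order, in combinatorial form: (1) for all `i ≠ j` some finite restriction
of one of `A i`, `A j` fails to embed into the other; and (2) every `A i` has a finite
restriction that does not embed into any `A j` (`j ≠ i`) all of whose finite restrictions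
embed into `A i`. -/
theorem nusLearnable_iff_solid {I : Type} [Countable I] (A : I → Struc)
    (hA : ∀ i j, i ≠ j → ¬ Isom (A i) (A j)) :
    (∃ M : Struc → ℕ → Option I, IsLearner M ∧ NUsLearns A M) ↔
      ((∀ i j, i ≠ j →
          ∃ s, ¬ EmbedsRestr (A i) s (A j) ∨ ¬ EmbedsRestr (A j) s (A i)) ∧
       (∀ i, ∃ s, ∀ j, j ≠ i → (∀ t, EmbedsRestr (A j) t (A i)) →
          ¬ EmbedsRestr (A i) s (A j))) := by
  constructor
  · rintro ⟨M, hM, hN⟩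
    exact solid_of_learner hM hN
  · rintro ⟨_h1, h2⟩
    obtain ⟨ι, hι⟩ := Countable.exists_injective_nat I
    choose w hw using h2
    exact ⟨learner A ι w, learner_isLearner A ι w,
      fun R i hR => learner_learns hι hw hR,
      fun R i hR s hs t ht => learner_persist hR hs t ht⟩
end
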